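/- (Duality lemma for the worst-case exponential loss) Let L̃(w) = Σ_{i=1}^m exp(−y_i⟨w, x_i⟩ + ε‖w‖_{p*}) and let γ̃ = max_{w ≠ 0} min_i min_{‖x'_i − x_i‖_p ≤ ε} y_i⟨w, x'_i⟩ / ‖w‖_r be the maximum worst-case ℓ_r margin, assumed positive. Then for any w ∈ ℝ^d and any subgradient g ∈ ∂L̃(w), it holds that γ̃ · L̃(w) ≤ ‖g‖_{r*}, where r* is the Hölder conjugate of r. -/

import Mathlib

noncomputable def lpNorm {d : ℕ} (p : ℝ) (w : Fin d → ℝ) : ℝ :=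
  (∑ j, |w j| ^ p) ^ (1 / p)

def dotp {d : ℕ} (w x : Fin d → ℝ) : ℝ := ∑ j, w j * x j

open Finset Real

/-!
Let `u ≠ 0` attain the maximal margin `γ̃`. Because Hölder's inequality is sharp, the worst-case
margin of `u` on the `i`-th sample is exactly `yᵢ ⟪u, xᵢ⟫ - ε ‖u‖_{p*}`, hence at least `γ̃ ‖u‖_r`.
Since `‖·‖_{p*}` is subadditive, every summand of `L̃` then decays at least like
`exp (-t γ̃ ‖u‖_r)` along the ray `w + t u`, so letting `t → 0⁺` in the subgradient inequality
gives `⟪g, u⟫ ≤ -γ̃ ‖u‖_r L̃(w)`. Hölder's inequality `-⟪g, u⟫ ≤ ‖g‖_{r*} ‖u‖_r` concludes.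
-/

section LpNorm

variable {d : ℕ} {p : ℝ}

lemma lpNorm_nonneg (p : ℝ) (w : Fin d → ℝ) : 0 ≤ lpNorm p w :=
  rpow_nonneg (sum_nonneg fun _ _ => rpow_nonneg (abs_nonneg _) _) _

lemma lpNorm_zero (hp : p ≠ 0) : lpNorm p (0 : Fin d → ℝ) = 0 := by
  simp [lpNorm, zero_rpow hp, zero_rpow (inv_ne_zero hp)]

lemma lpNorm_neg (p : ℝ) (w : Fin d → ℝ) : lpNorm p (-w) = lpNorm p w := by
  simp [lpNorm]

lemma lpNorm_smul (hp : 0 < p) (c : ℝ) (w : Fin d → ℝ) :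
    lpNorm p (c • w) = |c| * lpNorm p w := by
  have hterm : ∀ j, |(c • w) j| ^ p = |c| ^ p * |w j| ^ p := fun j => by
    rw [Pi.smul_apply, smul_eq_mul, abs_mul, mul_rpow (abs_nonneg c) (abs_nonneg (w j))]
  rw [lpNorm, lpNorm, Fintype.sum_congr _ _ hterm, ← mul_sum,
    mul_rpow (rpow_nonneg (abs_nonneg c) p) (sum_nonneg fun _ _ => rpow_nonneg (abs_nonneg _) _),
    ← rpow_mul (abs_nonneg c), mul_one_div_cancel hp.ne', rpow_one]

lemma lpNorm_pos {w : Fin d → ℝ} (hw : w ≠ 0) : 0 < lpNorm p w := by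
  obtain ⟨j, hj⟩ := Function.ne_iff.1 hw
  refine rpow_pos_of_pos ((rpow_pos_of_pos (abs_pos.2 hj) p).trans_le ?_) _
  exact single_le_sum (fun j _ => rpow_nonneg (abs_nonneg (w j)) p) (mem_univ j)

lemma lpNorm_add_le (hp : 1 ≤ p) (v w : Fin d → ℝ) :
    lpNorm p (v + w) ≤ lpNorm p v + lpNorm p w := by
  simpa [lpNorm] using Lp_add_le univ v w hp

end LpNorm

section Dotp

variable {d : ℕ} {p q : ℝ}

lemma dotp_add_left (u v x : Fin d → ℝ) : dotp (u + v) x = dotp u x + dotp v x := by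
  simp [dotp, add_mul, sum_add_distrib]

lemma dotp_smul_left (c : ℝ) (w x : Fin d → ℝ) : dotp (c • w) x = c * dotp w x := by
  simp [dotp, mul_sum, mul_assoc]

lemma dotp_sub_right (w x y : Fin d → ℝ) : dotp w (x - y) = dotp w x - dotp w y := by
  simp [dotp, mul_sub, sum_sub_distrib]

lemma dotp_smul_right (c : ℝ) (w x : Fin d → ℝ) : dotp w (c • x) = c * dotp w x := by
  simp [dotp, mul_sum, mul_left_comm]

lemma dotp_neg_right (w x : Fin d → ℝ) : dotp w (-x) = -dotp w x := by
  simp [dotp]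

lemma dotp_le_lpNorm_mul_lpNorm (hpq : p.HolderConjugate q) (w x : Fin d → ℝ) :
    dotp w x ≤ lpNorm p w * lpNorm q x :=
  inner_le_Lp_mul_Lq univ w x hpq

/-- Hölder's inequality is sharp: `v = w |w|^(q-2)`, normalised, attains it. -/
lemma exists_lpNorm_le_one_dotp_eq (hpq : p.HolderConjugate q) (w : Fin d → ℝ) :
    ∃ v, lpNorm p v ≤ 1 ∧ dotp w v = lpNorm q w := by
  set s : Fin d → ℝ := fun j => w j * |w j| ^ (q - 2)
  have hq := hpq.symm
  have habs : ∀ j, |s j| = |w j| ^ (q - 1) := fun j => by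
    rw [abs_mul, abs_of_nonneg (rpow_nonneg (abs_nonneg _) _),
      ← rpow_one_add' (abs_nonneg _) (by linarith [hq.lt])]
    ring_nf
  have hdot : ∀ j, w j * s j = |w j| ^ q := fun j => by
    rw [← mul_assoc, ← abs_mul_abs_self, mul_assoc,
      ← rpow_one_add' (abs_nonneg _) (by linarith [hq.lt]),
      ← rpow_one_add' (abs_nonneg _) (by linarith [hq.lt])]
    ring_nf
  have hpow : ∀ j, |s j| ^ p = |w j| ^ q := fun j => by
    rw [habs, ← rpow_mul (abs_nonneg _), hq.sub_one_mul_conj]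
  set S := ∑ j, |w j| ^ q
  have hSq : lpNorm q w = S ^ (1 / q) := rfl
  have hSp : lpNorm p s = S ^ (1 / p) := by
    rw [lpNorm, Fintype.sum_congr _ _ hpow]
  have hSs : dotp w s = S := Fintype.sum_congr _ _ hdot
  have hS_nonneg : 0 ≤ S := sum_nonneg fun j _ => rpow_nonneg (abs_nonneg (w j)) q
  have hS : S ^ (1 / p) * S ^ (1 / q) = S := by
    rw [← rpow_add' hS_nonneg (by rw [hpq.one_div_add_one_div]; norm_num),
      hpq.one_div_add_one_div, div_one, rpow_one]
  rcases hS_nonneg.eq_or_lt with hS0 | hS0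
  · refine ⟨0, by simp [lpNorm_zero hpq.ne_zero], ?_⟩
    rw [hSq, ← hS0, zero_rpow hq.one_div_ne_zero]
    simp [dotp]
  · refine ⟨(S ^ (1 / p))⁻¹ • s, ?_, ?_⟩
    · rw [lpNorm_smul hpq.pos, hSp, abs_inv, abs_of_pos (rpow_pos_of_pos hS0 _),
        inv_mul_cancel₀ (rpow_pos_of_pos hS0 _).ne']
    · rw [dotp_smul_right, hSs, hSq]
      nth_rw 2 [← hS]
      rw [inv_mul_cancel_left₀ (rpow_pos_of_pos hS0 _).ne']

end Dotp

section RobustMargin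

variable {d m : ℕ} {p q ε : ℝ}

theorem isLeast_robustMargin (hpq : p.HolderConjugate q) (hε : 0 ≤ ε) {y : ℝ} (hy : |y| = 1)
    (w x : Fin d → ℝ) :
    IsLeast {v | ∃ x', lpNorm p (x' - x) ≤ ε ∧ v = y * dotp w x'}
      (y * dotp w x - ε * lpNorm q w) := by
  have hyy : y * y = 1 := by rw [← abs_mul_abs_self, hy, one_mul]
  constructor
  · obtain ⟨v, hv, hwv⟩ := exists_lpNorm_le_one_dotp_eq hpq w
    refine ⟨x - (y * ε) • v, ?_, ?_⟩
    · rw [sub_sub_cancel_left, lpNorm_neg, lpNorm_smul hpq.pos, abs_mul, hy, abs_of_nonneg hε,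
        one_mul]
      exact mul_le_of_le_one_right hε hv
    · rw [dotp_sub_right, dotp_smul_right, hwv]
      linear_combination ε * lpNorm q w * hyy
  · rintro _ ⟨x', hx', rfl⟩
    have hHolder := dotp_le_lpNorm_mul_lpNorm hpq.symm w ((-y) • (x' - x))
    rw [dotp_smul_right, dotp_sub_right, lpNorm_smul hpq.pos, abs_neg, hy, one_mul] at hHolder
    nlinarith [mul_le_mul_of_nonneg_left hx' (lpNorm_nonneg q w)]

theorem mul_lpNorm_le_robustMargin_of_eq_sInf {r : ℝ} (hpq : p.HolderConjugate q)
    (hε : 0 ≤ ε) {xs : Fin m → Fin d → ℝ} {ys : Fin m → ℝ} (hy : ∀ i, |ys i| = 1)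
    {u : Fin d → ℝ} (hu : u ≠ 0) {γ : ℝ}
    (hγ : γ = sInf {v : ℝ | ∃ i : Fin m, ∃ x' : Fin d → ℝ,
          lpNorm p (x' - xs i) ≤ ε ∧ v = ys i * dotp u x' / lpNorm r u}) (i : Fin m) :
    γ * lpNorm r u ≤ ys i * dotp u (xs i) - ε * lpNorm q u := by
  have hR : 0 < lpNorm r u := lpNorm_pos hu
  have hleast := fun j => isLeast_robustMargin hpq hε (hy j) u (xs j)
  obtain ⟨b, hb⟩ := (Set.finite_range fun j => (ys j * dotp u (xs j) - ε * lpNorm q u) /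
    lpNorm r u).bddBelow
  obtain ⟨x', hx', hval⟩ := (hleast i).1
  rw [← le_div_iff₀ hR, hγ]
  refine csInf_le ⟨b, ?_⟩ ⟨i, x', hx', by rw [hval]⟩
  rintro _ ⟨j, x', hx', rfl⟩
  exact (hb ⟨j, rfl⟩).trans (div_le_div_of_nonneg_right ((hleast j).2 ⟨x', hx', rfl⟩) hR.le)

end RobustMargin

noncomputable def robustExpLoss {d m : ℕ} (q ε : ℝ) (xs : Fin m → Fin d → ℝ) (ys : Fin m → ℝ)
    (w : Fin d → ℝ) : ℝ :=
  ∑ i, exp (-(ys i * dotp w (xs i)) + ε * lpNorm q w)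

theorem robustExpLoss_add_smul_le {d m : ℕ} {q ε c t : ℝ} (hq : 1 ≤ q) (hε : 0 ≤ ε)
    {xs : Fin m → Fin d → ℝ} {ys : Fin m → ℝ} {u : Fin d → ℝ}
    (hu : ∀ i, c ≤ ys i * dotp u (xs i) - ε * lpNorm q u) (w : Fin d → ℝ) (ht : 0 ≤ t) :
    robustExpLoss q ε xs ys (w + t • u) ≤ exp (-(t * c)) * robustExpLoss q ε xs ys w := by
  rw [robustExpLoss, robustExpLoss, mul_sum]
  refine sum_le_sum fun i _ => ?_
  rw [← exp_add, exp_le_exp, dotp_add_left, dotp_smul_left]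
  have hnorm : lpNorm q (w + t • u) ≤ lpNorm q w + t * lpNorm q u := by
    simpa [lpNorm_smul (zero_lt_one.trans_le hq), abs_of_nonneg ht] using
      lpNorm_add_le hq w (t • u)
  nlinarith [mul_le_mul_of_nonneg_left hnorm hε, mul_le_mul_of_nonneg_left (hu i) ht]

theorem le_of_hasDerivAt_of_forall_pos_add_mul_le {f : ℝ → ℝ} {a f' : ℝ}
    (hf : HasDerivAt f f' 0) (h : ∀ t > 0, f 0 + t * a ≤ f t) : a ≤ f' := by
  refine ge_of_tendsto hf.tendsto_slope_zero_right ?_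
  filter_upwards [self_mem_nhdsWithin] with t (ht : 0 < t)
  rw [zero_add, smul_eq_mul, le_inv_mul_iff₀ ht]
  linarith [h t ht]

theorem duality_lemma_general {d m : ℕ}
    (p q r rc : ℝ) (hpq : p.HolderConjugate q) (hr : r.HolderConjugate rc)
    (xs : Fin m → Fin d → ℝ) (ys : Fin m → ℝ) (hy : ∀ i, ys i = 1 ∨ ys i = -1)
    (ε : ℝ) (hε : 0 ≤ ε)
    (L : (Fin d → ℝ) → ℝ)
    (hL : ∀ w, L w = ∑ i, Real.exp (-(ys i * dotp w (xs i)) + ε * lpNorm q w))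
    (γ : ℝ)
    (hγ : IsGreatest {g : ℝ | ∃ w : Fin d → ℝ, w ≠ 0 ∧
        g = sInf {v : ℝ | ∃ i : Fin m, ∃ x' : Fin d → ℝ,
          lpNorm p (x' - xs i) ≤ ε ∧ v = ys i * dotp w x' / lpNorm r w}} γ)
    (w g : Fin d → ℝ)
    (hg : ∀ z, L w + dotp g (z - w) ≤ L z) :
    γ * L w ≤ lpNorm rc g := by
  obtain ⟨u, hu, hγu⟩ := hγ.1
  obtain rfl : L = robustExpLoss q ε xs ys := funext hL
  have hR : 0 < lpNorm r u := lpNorm_pos hu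
  have hmargin := mul_lpNorm_le_robustMargin_of_eq_sInf hpq hε
    (fun i => by rcases hy i with h | h <;> simp [h]) hu hγu
  have hslope : dotp g u ≤ -(γ * lpNorm r u) * robustExpLoss q ε xs ys w := by
    refine le_of_hasDerivAt_of_forall_pos_add_mul_le (f := fun t =>
      exp (-(t * (γ * lpNorm r u))) * robustExpLoss q ε xs ys w) ?_ fun t ht => ?_
    · simpa using (((hasDerivAt_id 0).mul_const (γ * lpNorm r u)).neg.exp).mul_const
        (robustExpLoss q ε xs ys w)
    · simpa [dotp_smul_right] using (hg (w + t • u)).trans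
        (robustExpLoss_add_smul_le hpq.symm.lt.le hε hmargin w ht.le)
  have hHolder := dotp_le_lpNorm_mul_lpNorm hr.symm g (-u)
  rw [dotp_neg_right, lpNorm_neg] at hHolder
  exact le_of_mul_le_mul_right (by linarith) hR

/-- Duality lemma: if `γ̃` is the maximum worst-case `ℓ_r` margin (positive),
then for every `w` and every subgradient `g` of the worst-case exponential
loss at `w`, `γ̃ · L̃(w) ≤ ‖g‖_{r*}`. -/
theorem duality_lemma {d m : ℕ} (hm : 0 < m)
    (p q r rc : ℝ) (hpq : p.HolderConjugate q) (hr : r.HolderConjugate rc)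
    (xs : Fin m → Fin d → ℝ) (ys : Fin m → ℝ) (hy : ∀ i, ys i = 1 ∨ ys i = -1)
    (ε : ℝ) (hε : 0 ≤ ε)
    (L : (Fin d → ℝ) → ℝ)
    (hL : ∀ w, L w = ∑ i, Real.exp (-(ys i * dotp w (xs i)) + ε * lpNorm q w))
    (γ : ℝ) (hγpos : 0 < γ)
    (hγ : IsGreatest {g : ℝ | ∃ w : Fin d → ℝ, w ≠ 0 ∧
        g = sInf {v : ℝ | ∃ i : Fin m, ∃ x' : Fin d → ℝ,
          lpNorm p (x' - xs i) ≤ ε ∧ v = ys i * dotp w x' / lpNorm r w}} γ)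
    (w g : Fin d → ℝ)
    (hg : ∀ z, L w + dotp g (z - w) ≤ L z) :
    γ * L w ≤ lpNorm rc g :=
  duality_lemma_general p q r rc hpq hr xs ys hy ε hε L hL γ hγ w g hg
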